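/- For all n ≥ 2, the number of edges counted over all root-to-leaf paths in all plane (ordered) trees on n vertices equals 4^(n-2). Equivalently, the sum over all plane trees T on n vertices of the sum over leaves l of T of the distance from the root to l equals 4^(n-2). -/

import Mathlib

inductive PlaneTree : Type where
  | node : List PlaneTree → PlaneTree

namespace PlaneTree

mutual
def size : PlaneTree → ℕ
  | .node ts => 1 + sizeList ts
def sizeList : List PlaneTree → ℕ
  | [] => 0
  | t :: ts => size t + sizeList ts
end

mutual
def positions : PlaneTree → List (List ℕ)
  | .node ts => [] :: positionsList 0 ts
def positionsList : ℕ → List PlaneTree → List (List ℕ)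
  | _, [] => []
  | i, t :: ts => (positions t).map (i :: ·) ++ positionsList (i+1) ts
end

mutual
def leafPositions : PlaneTree → List (List ℕ)
  | .node [] => [[]]
  | .node (t :: ts) => leafList 0 (t :: ts)
def leafList : ℕ → List PlaneTree → List (List ℕ)
  | _, [] => []
  | i, t :: ts => (leafPositions t).map (i :: ·) ++ leafList (i+1) ts
end

def isPrefixB : List ℕ → List ℕ → Bool
  | [], _ => true
  | _ :: _, [] => false
  | a :: as, b :: bs => a == b && isPrefixB as bs

def lcpLen : List ℕ → List ℕ → ℕ
  | a :: as, b :: bs => if a = b then 1 + lcpLen as bs else 0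
  | _, _ => 0

/-- number of edges on the path between two vertices given by positions -/
def pathDist (p q : List ℕ) : ℕ :=
  (p.length - lcpLen p q) + (q.length - lcpLen p q)

/-- number of vertical paths (vertex, proper descendant) in a tree -/
def verticalPairs (T : PlaneTree) : ℕ :=
  ((positions T).map (fun q =>
    ((positions T).filter (fun p => p != q && isPrefixB p q)).length)).sum

/-- total number of edges over all vertical paths in a tree -/
def verticalEdges (T : PlaneTree) : ℕ :=
  ((positions T).map (fun q =>
    (((positions T).filter (fun p => p != q && isPrefixB p q)).map
      (fun p => q.length - p.length)).sum)).sum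

/-- number of (unordered) paths between distinct vertices -/
def pathCount (T : PlaneTree) : ℕ := ((positions T).sublistsLen 2).length

/-- Wiener index: sum of distances over unordered pairs of distinct vertices -/
def wiener (T : PlaneTree) : ℕ :=
  (((positions T).sublistsLen 2).map (fun l =>
    match l with
    | [p, q] => pathDist p q
    | _ => 0)).sum

end PlaneTree


/-!
Generating functions. Let `F` count forests by their number of vertices, let `U` sum the number
of leaves of forests, and let `D` sum the total leaf depth of trees. Splitting a nonempty forest
into its first tree and the remaining forest, and a tree into its root and the forest of its
subtrees (whose leaves all lie one edge deeper), gives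
`F = 1 + X F²`, `U = X ((U + 1) F + F U)` and `D = X ((D + U + 1) F + F D)`.
Eliminating `F` and `U` leaves `D (1 - 4X) = X`.
-/

namespace PlaneTree

open Finset PowerSeries

def forests : ℕ → List (List PlaneTree)
  | 0 => [[]]
  | m + 1 => (List.Nat.antidiagonal m).attach.flatMap fun p =>
      (forests p.1.1).flatMap fun G => (forests p.1.2).map fun f => node G :: f
decreasing_by
  all_goals have := List.Nat.mem_antidiagonal.1 p.2
  all_goals simp_wf; omega

theorem forests_zero : forests 0 = [[]] := by
  rw [forests]

theorem mem_forests_succ_iff {m : ℕ} {ts : List PlaneTree} :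
    ts ∈ forests (m + 1) ↔ ∃ p ∈ antidiagonal m, ∃ G ∈ forests p.1, ∃ f ∈ forests p.2,
      node G :: f = ts := by
  rw [forests]
  simp

theorem mem_forests {m : ℕ} {ts : List PlaneTree} : ts ∈ forests m ↔ sizeList ts = m := by
  induction m using Nat.strong_induction_on generalizing ts with
  | _ m ih =>
  rcases m with _ | m
  · rcases ts with _ | ⟨⟨G⟩, f⟩ <;> simp [forests_zero, sizeList, size]
  rw [mem_forests_succ_iff]
  constructor
  · rintro ⟨p, hp, G, hG, f, hf, rfl⟩
    rw [HasAntidiagonal.mem_antidiagonal] at hp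
    rw [ih _ (by omega)] at hG hf
    simp only [sizeList, size]
    omega
  · rcases ts with _ | ⟨⟨G⟩, f⟩
    · simp [sizeList]
    · intro h
      simp only [sizeList, size] at h
      exact ⟨(sizeList G, sizeList f), by simp; omega, G, (ih _ (by omega)).2 rfl,
        f, (ih _ (by omega)).2 rfl, rfl⟩

theorem nodup_forests (m : ℕ) : (forests m).Nodup := by
  induction m using Nat.strong_induction_on with
  | _ m ih =>
  rcases m with _ | m
  · simp [forests_zero]
  have mem_block {p : ℕ × ℕ} {ts : List PlaneTree} :
      ts ∈ (forests p.1).flatMap (fun G => (forests p.2).map fun f => node G :: f) →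
        ∃ G f, ts = node G :: f ∧ (sizeList G, sizeList f) = p := by
    simp only [List.mem_flatMap, List.mem_map, mem_forests]
    rintro ⟨G, hG, f, hf, rfl⟩
    exact ⟨G, f, rfl, Prod.ext hG hf⟩
  rw [forests, List.nodup_flatMap]
  refine ⟨fun p _ => ?_, (List.Nat.nodup_antidiagonal m).attach.imp fun hne => ?_⟩
  · have := List.Nat.mem_antidiagonal.1 p.2
    rw [List.nodup_flatMap]
    refine ⟨fun G _ => (ih _ (by omega)).map List.cons_injective,
      (ih _ (by omega)).imp fun hG => ?_⟩
    simp only [Function.onFun, List.disjoint_left, List.mem_map]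
    rintro _ ⟨f, -, rfl⟩ ⟨f', -, h⟩
    exact hG (node.inj (List.cons.inj h).1).symm
  · simp only [Function.onFun, List.disjoint_left]
    intro ts h h'
    obtain ⟨G, f, rfl, hp⟩ := mem_block h
    obtain ⟨G', f', h'', hq⟩ := mem_block h'
    obtain ⟨hG, rfl⟩ := List.cons.inj h''
    obtain rfl := node.inj hG
    exact hne (Subtype.ext (hp.symm.trans hq))

theorem sum_forests_succ {M : Type*} [AddCommMonoid M] (m : ℕ) (w : List PlaneTree → M) :
    ((forests (m + 1)).map w).sum = ∑ p ∈ antidiagonal m,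
      ((forests p.1).map fun G => ((forests p.2).map fun f => w (node G :: f)).sum).sum := by
  rw [forests]
  simp only [List.flatMap, List.map_attach_eq_pmap, List.pmap_eq_map, List.map_flatten,
    List.map_map, Function.comp_def, List.sum_flatten]
  rfl

theorem finsum_size_eq_sum_forests {M : Type*} [AddCommMonoid M] (m : ℕ) (f : PlaneTree → M) :
    ∑ᶠ T : {T : PlaneTree // T.size = m + 1}, f T =
      ((forests m).map fun G => f (node G)).sum := by
  classical
  have hnodup : ((forests m).map node).Nodup :=
    (nodup_forests m).map fun _ _ => node.inj
  have hmem (T : PlaneTree) : T.size = m + 1 ↔ T ∈ ((forests m).map node).toFinset := by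
    rcases T with ⟨G⟩
    simp only [size, List.mem_toFinset, List.mem_map, mem_forests, node.injEq, exists_eq_right]
    omega
  rw [finsum_subtype_eq_finsum_cond]
  simp_rw [hmem]
  rw [finsum_mem_finset_eq_sum, List.sum_toFinset _ hnodup, List.map_map]
  rfl

section Series

variable {R : Type*} [CommSemiring R]

def forestSeries (w : List PlaneTree → R) : R⟦X⟧ :=
  mk fun m => ((forests m).map w).sum

-- The coefficient of `X ^ m` is a sum over the trees with `m + 1` vertices.
def treeSeries (s : PlaneTree → R) : R⟦X⟧ :=
  forestSeries fun ts => s (node ts)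

theorem forestSeries_one :
    forestSeries (1 : List PlaneTree → R) = 1 + X * (forestSeries 1 * forestSeries 1) := by
  ext (_ | m)
  · simp [forestSeries, forests_zero]
  · rw [map_add, coeff_succ_X_mul, coeff_mul]
    simp only [forestSeries, coeff_mk, sum_forests_succ]
    simp [Pi.one_def, mul_comm]

theorem forestSeries_sum_map (s : PlaneTree → R) :
    forestSeries (fun ts => (ts.map s).sum) =
      X * (treeSeries s * forestSeries 1 +
        forestSeries 1 * forestSeries fun ts => (ts.map s).sum) := by
  ext (_ | m)
  · simp [forestSeries, forests_zero]
  · rw [coeff_succ_X_mul, map_add, coeff_mul, coeff_mul, ← Finset.sum_add_distrib]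
    simp [forestSeries, treeSeries, sum_forests_succ, List.sum_map_add,
      List.sum_map_mul_left, Pi.one_def, mul_comm]

theorem treeSeries_add (s s' : PlaneTree → R) :
    treeSeries (fun t => s t + s' t) = treeSeries s + treeSeries s' := by
  ext m
  simp [treeSeries, forestSeries, List.sum_map_add]

end Series

def leafCount (t : PlaneTree) : ℕ := t.leafPositions.length

def leafDepthSum (t : PlaneTree) : ℕ := (t.leafPositions.map List.length).sum

theorem length_leafList (i : ℕ) (ts : List PlaneTree) :
    (leafList i ts).length = (ts.map leafCount).sum := by
  induction ts generalizing i with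
  | nil => simp [leafList]
  | cons t ts ih => simp [leafList, ih, leafCount]

theorem sum_length_leafList (i : ℕ) (ts : List PlaneTree) :
    ((leafList i ts).map List.length).sum = (ts.map fun t => leafDepthSum t + leafCount t).sum := by
  induction ts generalizing i with
  | nil => simp [leafList]
  | cons t ts ih =>
    simp [leafList, ih, leafDepthSum, leafCount, Function.comp_def, List.sum_map_add]

theorem leafCount_node_nil : leafCount (node []) = 1 := rfl

theorem leafCount_node_cons (t : PlaneTree) (ts : List PlaneTree) :
    leafCount (node (t :: ts)) = ((t :: ts).map leafCount).sum := by
  rw [leafCount, leafPositions, length_leafList]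

theorem leafDepthSum_node (ts : List PlaneTree) :
    leafDepthSum (node ts) = (ts.map fun t => leafDepthSum t + leafCount t).sum := by
  cases ts with
  | nil => rfl
  | cons t ts => rw [leafDepthSum, leafPositions, sum_length_leafList]

theorem treeSeries_leafCount_eq_forestSeries_add_one :
    treeSeries (fun t => (leafCount t : ℤ)) =
      forestSeries (fun ts => (ts.map fun t => (leafCount t : ℤ)).sum) + 1 := by
  ext (_ | m)
  · simp [treeSeries, forestSeries, forests_zero, leafCount_node_nil]
  · simp only [treeSeries, forestSeries, coeff_mk, map_add, coeff_one, if_neg m.succ_ne_zero,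
      add_zero]
    refine congrArg List.sum (List.map_congr_left fun G hG => ?_)
    rcases G with _ | ⟨t, ts⟩
    · simp [mem_forests, sizeList] at hG
    · simp [leafCount_node_cons, Function.comp_def]

theorem treeSeries_leafDepthSum_eq_forestSeries :
    treeSeries (fun t => (leafDepthSum t : ℤ)) =
      forestSeries (fun ts => (ts.map fun t => (leafDepthSum t : ℤ) + leafCount t).sum) := by
  simp [treeSeries, leafDepthSum_node, Function.comp_def]

theorem treeSeries_leafDepthSum_mul_one_sub_four_X :
    treeSeries (fun t => (leafDepthSum t : ℤ)) * (1 - 4 * X) = X := by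
  set F := forestSeries (1 : List PlaneTree → ℤ)
  set U := forestSeries fun ts => (ts.map fun t => (leafCount t : ℤ)).sum
  set D := treeSeries fun t => (leafDepthSum t : ℤ)
  have hF : F = 1 + X * (F * F) := forestSeries_one
  have hU : U = X * ((U + 1) * F + F * U) := by
    rw [← treeSeries_leafCount_eq_forestSeries_add_one]
    exact forestSeries_sum_map _
  have hD : D = X * ((D + (U + 1)) * F + F * D) := by
    have := forestSeries_sum_map fun t => (leafDepthSum t : ℤ) + leafCount t
    rwa [← treeSeries_leafDepthSum_eq_forestSeries, treeSeries_add,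
      treeSeries_leafCount_eq_forestSeries_add_one] at this
  -- With `s = 1 - 2XF`: `s² = 1 - 4X`, `U s = XF` and `D s = XF (U + 1)`,
  -- so `D s² = XF (1 - XF) = X`.
  linear_combination (X + 4 * X * D) * hF + (X * F) * hU + (1 - 2 * X * F) * hD

theorem treeSeries_leafDepthSum_eq_X_mul_mk_four_pow :
    treeSeries (fun t => (leafDepthSum t : ℤ)) = X * PowerSeries.mk fun n => 4 ^ n := by
  have geom : (PowerSeries.mk fun n => (4 : ℤ) ^ n) * (1 - 4 * X) = 1 := by
    simpa [rescale_mk] using congrArg (rescale (4 : ℤ)) (mk_one_mul_one_sub_eq_one ℤ)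
  linear_combination
    (PowerSeries.mk fun n => (4 : ℤ) ^ n) * treeSeries_leafDepthSum_mul_one_sub_four_X -
      (treeSeries fun t => (leafDepthSum t : ℤ)) * geom

theorem sum_forests_leafDepthSum_node (m : ℕ) :
    ((forests (m + 1)).map fun G => leafDepthSum (node G)).sum = 4 ^ m := by
  have h := congrArg (coeff (m + 1)) treeSeries_leafDepthSum_eq_X_mul_mk_four_pow
  simp only [treeSeries, forestSeries, coeff_mk, coeff_succ_X_mul] at h
  zify
  simpa [Nat.cast_list_sum, Function.comp_def] using h

end PlaneTree

theorem total_root_to_leaf_edges_plane_trees (n : ℕ) (hn : 2 ≤ n) :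
    (∑ᶠ T : {T : PlaneTree // T.size = n}, ((T.1.leafPositions).map List.length).sum)
      = 4 ^ (n - 2) := by
  obtain ⟨m, rfl⟩ : ∃ m, n = m + 2 := ⟨n - 2, by omega⟩
  change ∑ᶠ T : {T : PlaneTree // T.size = m + 1 + 1}, PlaneTree.leafDepthSum T = 4 ^ m
  rw [PlaneTree.finsum_size_eq_sum_forests, PlaneTree.sum_forests_leafDepthSum_node]
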